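/- Let q > 1, w ∈ A_q, and let r be finite with r > 2q and r′ = r/(r−1). Fix linearizing data (G, g, M, N_k, a_k) as in the definition of density. Then for every λ > 0 and every finite collection 𝐏 of bitiles there exists 𝐏′ ⊆ 𝐏 with density(𝐏′) < λ/2 such that 𝐏 ∖ 𝐏′ can be written as a union of trees, 𝐏 ∖ 𝐏′ = ⋃_{T ∈ 𝐓} T, with Σ_{T ∈ 𝐓} w(I_T) ≤ C λ^{−r′} w(G), where C depends only on q, r and [w]_{A_q}. -/

import Mathlib

open MeasureTheory Set
open scoped ENNReal NNReal Classical

noncomputable section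
namespace Paper

/-- The Walsh functions `W_k`, supported on `[0,1)`. -/
def walsh (k : ℕ) (x : ℝ) : ℝ :=
  if h : k = 0 then (if 0 ≤ x ∧ x < 1 then (1:ℝ) else 0)
  else walsh (k / 2) (2 * x) + (if k % 2 = 0 then (1:ℝ) else -1) * walsh (k / 2) (2 * x - 1)
termination_by k
decreasing_by all_goals exact Nat.div_lt_self (Nat.pos_of_ne_zero h) one_lt_two

/-- The dyadic interval `[2^j m, 2^j (m+1))`. -/
def dyadicI (j m : ℤ) : Set ℝ := Ico ((2:ℝ)^j * (m:ℝ)) ((2:ℝ)^j * ((m:ℝ)+1))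

/-- A weight: positive a.e. and locally integrable. -/
def IsWeight (w : ℝ → ℝ) : Prop :=
  (∀ᵐ x ∂(volume : Measure ℝ), 0 < w x) ∧ LocallyIntegrable w volume

/-- The measure `w(x) dx`. -/
def wMeasure (w : ℝ → ℝ) : Measure ℝ := volume.withDensity fun x => ENNReal.ofReal (w x)

/-- `[w]_{A_p} ≤ A` over dyadic intervals, for `1 < p`. -/
def ApBoundedBy (w : ℝ → ℝ) (p A : ℝ) : Prop :=
  ∀ j m : ℤ,
    ((2:ℝ)^(-j) * ∫ x in dyadicI j m, w x) *
      ((2:ℝ)^(-j) * ∫ x in dyadicI j m, w x ^ (-1/(p-1)))^(p-1) ≤ A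

/-- `[w]_{A_1} ≤ A` over dyadic intervals. -/
def A1BoundedBy (w : ℝ → ℝ) (A : ℝ) : Prop :=
  ∀ j m : ℤ,
    (2:ℝ)^(-j) * ∫ x in dyadicI j m, w x ≤ A * essInf w (volume.restrict (dyadicI j m))

/-- `w ∈ A_q` for `q ∈ [1,∞)`, covering also the case `q = 1`. -/
def MemAq (w : ℝ → ℝ) (q : ℝ) : Prop :=
  IsWeight w ∧ ((q = 1 ∧ ∃ A, A1BoundedBy w A) ∨ (1 < q ∧ ∃ A, ApBoundedBy w q A))

/-- `⟨f,g⟩ = ∫_0^1 f g`. -/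
def inner01 (f g : ℝ → ℝ) : ℝ := ∫ x in Ico (0:ℝ) 1, f x * g x

/-- Walsh--Fourier partial sums, `S_n f = 0` for `n < 0`. -/
def walshSum (f : ℝ → ℝ) (n : ℤ) (x : ℝ) : ℝ :=
  if n < 0 then 0
  else ∑ k ∈ Finset.range (n.toNat + 1), inner01 f (walsh k) * walsh k x

/-- Pointwise `r`-variation sup over all finite increasing integer sequences. -/
def varNormE (r : ℝ) (u : ℤ → ℝ) : ℝ≥0∞ :=
  ⨆ (M : ℕ) (N : Fin (M + 1) → ℤ) (_ : StrictMono N),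
    ENNReal.ofReal ((∑ j : Fin M, |u (N j.succ) - u (N j.castSucc)| ^ r) ^ (1 / r))

/-- A tile `[2^j m, 2^j (m+1)) × [2^{-j} n, 2^{-j}(n+1))`. -/
structure Tile where
  j : ℤ
  m : ℕ
  n : ℕ
deriving DecidableEq

namespace Tile
def timeI (p : Tile) : Set ℝ := Ico ((2:ℝ)^p.j * (p.m:ℝ)) ((2:ℝ)^p.j * ((p.m:ℝ)+1))
def freqI (p : Tile) : Set ℝ := Ico ((2:ℝ)^(-p.j) * (p.n:ℝ)) ((2:ℝ)^(-p.j) * ((p.n:ℝ)+1))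
def len (p : Tile) : ℝ := (2:ℝ)^p.j
def rect (p : Tile) : Set (ℝ × ℝ) := p.timeI ×ˢ p.freqI
/-- The order `p < q` on tiles: the tiles intersect and `I_p ⊆ I_q`. -/
def below (p q : Tile) : Prop := (p.rect ∩ q.rect).Nonempty ∧ p.timeI ⊆ q.timeI
/-- The Walsh packet of a tile. -/
def packet (p : Tile) (x : ℝ) : ℝ :=
  (2:ℝ) ^ (-(p.j:ℝ)/2) * walsh p.n ((2:ℝ)^(-p.j) * x - (p.m:ℝ))
end Tile

/-- A bitile `[2^j m, 2^j (m+1)) × [2^{1-j} n, 2^{1-j}(n+1))` (area 2). -/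
structure Bitile where
  j : ℤ
  m : ℕ
  n : ℕ
deriving DecidableEq

namespace Bitile
def timeI (P : Bitile) : Set ℝ := Ico ((2:ℝ)^P.j * (P.m:ℝ)) ((2:ℝ)^P.j * ((P.m:ℝ)+1))
def freqI (P : Bitile) : Set ℝ := Ico ((2:ℝ)^(1-P.j) * (P.n:ℝ)) ((2:ℝ)^(1-P.j) * ((P.n:ℝ)+1))
def len (P : Bitile) : ℝ := (2:ℝ)^P.j
def rect (P : Bitile) : Set (ℝ × ℝ) := P.timeI ×ˢ P.freqI
/-- The order `P < Q` on bitiles. -/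
def below (P Q : Bitile) : Prop := (P.rect ∩ Q.rect).Nonempty ∧ P.timeI ⊆ Q.timeI
/-- The lower tile `P_1`. -/
def lower (P : Bitile) : Tile := ⟨P.j, P.m, 2 * P.n⟩
/-- The upper tile `P_2`. -/
def upper (P : Bitile) : Tile := ⟨P.j, P.m, 2 * P.n + 1⟩
end Bitile

/-- A tree of bitiles with top `P_T`. -/
structure Tree where
  top : Bitile
  elems : Finset Bitile
  below_top : ∀ P ∈ elems, P.below top

/-- A tree is 2-overlapping if `P_2 < (P_T)_2` for all its members. -/
def Tree.TwoOverlapping (T : Tree) : Prop :=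
  ∀ P ∈ T.elems, (Bitile.upper P).below T.top.upper

/-- A tree is 1-overlapping if `P_1 < (P_T)_1` for all its members. -/
def Tree.OneOverlapping (T : Tree) : Prop :=
  ∀ P ∈ T.elems, (Bitile.lower P).below T.top.lower

/-- `⟨f, φ_p⟩`. -/
def pinner (f : ℝ → ℝ) (p : Tile) : ℝ := ∫ y, f y * p.packet y

/-- The tree square function `S_T f`. -/
def treeSq (f : ℝ → ℝ) (T : Tree) (x : ℝ) : ℝ :=
  Real.sqrt (∑ P ∈ T.elems,
    (pinner f P.lower)^2 * Set.indicator P.timeI (fun _ => (1:ℝ)) x / P.len)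

/-- The (weighted) size of a collection of bitiles: the least constant `C` with
`‖S_T f‖_{L²(w)} ≤ C w(I_T)^{1/2}` over all 2-overlapping trees in the collection,
realized as a supremum of ratios. -/
def size (w f : ℝ → ℝ) (Ps : Set Bitile) : ℝ≥0∞ :=
  ⨆ (T : Tree) (_ : (T.elems : Set Bitile) ⊆ Ps ∧ T.TwoOverlapping),
    eLpNorm (treeSq f T) 2 (wMeasure w) / (wMeasure w T.top.timeI) ^ (1/2 : ℝ)

/-- The coefficient `a_P(x)` built from linearizing data. -/
def coefP (M : ℝ → ℕ) (N : ℕ → ℝ → ℤ) (a : ℕ → ℝ → ℝ) (P : Bitile) (x : ℝ) : ℝ :=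
  ∑ j ∈ Finset.Icc 1 (M x),
    if ((N (j-1) x : ℝ)) ∉ P.freqI ∧ ((N j x : ℝ)) ∈ (Bitile.upper P).freqI then a j x else 0

/-- The (weighted) density of a collection of bitiles. -/
def density (w g : ℝ → ℝ) (r' : ℝ) (M : ℝ → ℕ) (N : ℕ → ℝ → ℤ) (a : ℕ → ℝ → ℝ)
    (Ps : Set Bitile) : ℝ≥0∞ :=
  ⨆ (P : Bitile) (_ : P ∈ Ps) (Q : Bitile) (_ : P.below Q),
    (ENNReal.ofReal (∫ x in Q.timeI,
        |g x| ^ r' * (∑ k ∈ Finset.Icc 1 (M x),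
          if ((N k x : ℝ)) ∈ Q.freqI then |a k x| ^ r' else 0) * w x)
      / wMeasure w Q.timeI) ^ (1/r')

/-- The bilinear form `B_Ps(f,g)`. -/
def bform (w f g : ℝ → ℝ) (M : ℝ → ℕ) (N : ℕ → ℝ → ℤ) (a : ℕ → ℝ → ℝ)
    (Ps : Finset Bitile) : ℝ :=
  ∑ P ∈ Ps, pinner f P.lower * ∫ x, P.lower.packet x * coefP M N a P x * g x * w x

/-- The linearized tree operator `C_T f`. -/
def treeOp (f : ℝ → ℝ) (M : ℝ → ℕ) (N : ℕ → ℝ → ℤ) (a : ℕ → ℝ → ℝ) (T : Tree) (x : ℝ) : ℝ :=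
  ∑ P ∈ T.elems, pinner f P.lower * P.lower.packet x * coefP M N a P x

/-- The Haar function of the dyadic interval `[2^j m, 2^j(m+1))`. -/
def haarFn (j m : ℤ) (x : ℝ) : ℝ :=
  if x ∈ Ico ((2:ℝ)^j * (m:ℝ)) ((2:ℝ)^j * ((m:ℝ) + 1/2)) then (2:ℝ) ^ (-(j:ℝ)/2)
  else if x ∈ Ico ((2:ℝ)^j * ((m:ℝ) + 1/2)) ((2:ℝ)^j * ((m:ℝ)+1)) then -(2:ℝ) ^ (-(j:ℝ)/2)
  else 0

/-- The martingale difference projection `Δ_j f` onto Haar functions at scale `2^{1-j}`. -/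
def haarProj (j : ℤ) (f : ℝ → ℝ) (x : ℝ) : ℝ :=
  ∑' m : ℤ, (∫ y, f y * haarFn (1-j) m y) * haarFn (1-j) m x

/-- The pointwise `r`-variation of the Haar martingale of `f`. -/
def varHaar (r : ℝ) (f : ℝ → ℝ) (x : ℝ) : ℝ≥0∞ :=
  ⨆ (M : ℕ) (N : Fin (M + 1) → ℤ) (_ : StrictMono N),
    ENNReal.ofReal ((∑ k : Fin M,
      |∑ j ∈ Finset.Ioc (N k.castSucc) (N k.succ), haarProj j f x| ^ r) ^ (1/r))

/-- The jump counting function `M_λ(x)`. -/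
def jumpCount (f : ℝ → ℝ) (lam : ℝ) (x : ℝ) : ℝ≥0∞ :=
  ⨆ (M : ℕ) (N : Fin (M + 1) → ℤ) (_ : StrictMono N),
    ((Finset.univ.filter (fun k : Fin M =>
      lam < |∑ j ∈ Finset.Ioc (N k.castSucc) (N k.succ), haarProj j f x|)).card : ℝ≥0∞)

/-- The square function of a finite collection of tiles. -/
def tileSq (f : ℝ → ℝ) (Ds : Finset Tile) (x : ℝ) : ℝ :=
  Real.sqrt (∑ p ∈ Ds, (pinner f p)^2 * Set.indicator p.timeI (fun _ => (1:ℝ)) x / p.len)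

/-- The dyadic sharp maximal function. -/
def sharpMax (g : ℝ → ℝ) (x : ℝ) : ℝ≥0∞ :=
  ⨆ (j : ℤ) (m : ℤ) (_ : x ∈ dyadicI j m),
    ⨅ c : ℝ, ENNReal.ofReal ((2:ℝ)^(-j) * ∫ y in dyadicI j m, |g y - c|)

/-- The dyadic `L²` maximal function `M_2`. -/
def M2fn (f : ℝ → ℝ) (x : ℝ) : ℝ≥0∞ :=
  ⨆ (j : ℤ) (m : ℤ) (_ : x ∈ dyadicI j m),
    ENNReal.ofReal (((2:ℝ)^(-j) * ∫ y in dyadicI j m, (f y)^2) ^ (1/2:ℝ))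

/-- The weak `L^{1,∞}(μ)` quasinorm. -/
def wkNorm (g : ℝ → ℝ) (μ : Measure ℝ) : ℝ≥0∞ :=
  ⨆ lam : ℝ, ENNReal.ofReal lam * μ {x | lam < |g x|}

end Paper

/-!
Keep the bitiles whose own density is below `λ/2`. Every other bitile `P` lies below some `Q`
whose density term exceeds `λ/4`, that is
`w(I_Q) < (λ/4)^{-r'} ∫_{I_Q} |g|^{r'} Σ_{N_k ∈ ω_Q} |a_k|^{r'} w`,
and it suffices to keep the maximal such `Q` as tree tops. Maximal bitiles are pairwise disjoint
as rectangles, so at each `x` every frequency `N_k(x)` lies in `ω_Q` for at most one top `Q`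
with `x ∈ I_Q`; since `|g| ≤ 1_G` and `Σ_k |a_k|^{r'} = 1`, the integrals over the tops add up
to at most `w(G)`.
-/

theorem Finset.exists_isAntichain_cover {α : Type*} [PartialOrder α] (S : Finset α)
    (p : α → Prop) (h : ∀ a ∈ S, ∃ b, a ≤ b ∧ p b) :
    ∃ F : Finset α, IsAntichain (· ≤ ·) (F : Set α) ∧ (∀ b ∈ F, p b) ∧
      ∀ a ∈ S, ∃ b ∈ F, a ≤ b := by
  choose f hf using h
  set W := S.attach.image fun a => f a.1 a.2
  refine ⟨W.filter (Maximal (· ∈ W)), (setOfPred_maximal_antichain _).subset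
    fun b hb => (Finset.mem_filter.mp hb).2, fun b hb => ?_, fun a ha => ?_⟩
  · obtain ⟨⟨a, ha⟩, -, rfl⟩ := Finset.mem_image.mp (Finset.mem_filter.mp hb).1
    exact (hf a ha).2
  · obtain ⟨b, hab, hb⟩ := W.exists_le_maximal
      (Finset.mem_image_of_mem _ (Finset.mem_attach _ ⟨a, ha⟩))
    exact ⟨b, Finset.mem_filter.mpr ⟨hb.prop, hb⟩, (hf a ha).1.trans hab⟩

theorem ENNReal.ofReal_integral_le_lintegral_ofReal {α : Type*} [MeasurableSpace α]
    (μ : Measure α) (f : α → ℝ) :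
    ENNReal.ofReal (∫ x, f x ∂μ) ≤ ∫⁻ x, ENNReal.ofReal (f x) ∂μ := by
  by_cases hf : Integrable f μ
  · calc ENNReal.ofReal (∫ x, f x ∂μ) ≤ ENNReal.ofReal (∫ x, max (f x) 0 ∂μ) :=
          ENNReal.ofReal_le_ofReal (integral_mono hf hf.pos_part fun x => le_max_left _ _)
      _ = ∫⁻ x, ENNReal.ofReal (f x) ∂μ := by
          rw [ofReal_integral_eq_lintegral_ofReal hf.pos_part
            (ae_of_all _ fun x => le_max_right _ _)]
          simp
  · simp [integral_undef hf]

theorem Finset.sum_lintegral_le_lintegral_sum {α ι : Type*} [MeasurableSpace α]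
    (μ : Measure α) (s : Finset ι) (f : ι → α → ℝ≥0∞) :
    ∑ i ∈ s, ∫⁻ x, f i x ∂μ ≤ ∫⁻ x, ∑ i ∈ s, f i x ∂μ := by
  induction s using Finset.induction_on with
  | empty => simp
  | insert i s hi ih =>
    simp only [Finset.sum_insert hi]
    exact (add_le_add le_rfl ih).trans (le_lintegral_add _ _)

theorem ENNReal.inv_ofReal_div_rpow {x y : ℝ} (hx : 0 < x) (hy : 0 < y) (p : ℝ) :
    (ENNReal.ofReal (x / y) ^ p)⁻¹ = ENNReal.ofReal (y ^ p) * ENNReal.ofReal x ^ (-p) := by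
  rw [← ENNReal.rpow_neg, ENNReal.ofReal_rpow_of_pos (div_pos hx hy),
    ENNReal.ofReal_rpow_of_pos hx, ← ENNReal.ofReal_mul (Real.rpow_nonneg hy.le p),
    Real.div_rpow hx.le hy.le, Real.rpow_neg hy.le, div_inv_eq_mul, mul_comm]

namespace Paper

lemma Ico_zpow_mul_subset_of_mem {a b : ℤ} (hab : a ≤ b) {m u : ℕ} {x : ℝ}
    (hxm : x ∈ Ico ((2:ℝ)^a * m) ((2:ℝ)^a * (m+1)))
    (hxu : x ∈ Ico ((2:ℝ)^b * u) ((2:ℝ)^b * (u+1))) :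
    Ico ((2:ℝ)^a * m) ((2:ℝ)^a * (m+1)) ⊆ Ico ((2:ℝ)^b * u) ((2:ℝ)^b * (u+1)) := by
  obtain ⟨d, hd⟩ : ∃ d : ℕ, (2:ℝ)^b = 2^a * d := by
    refine ⟨2 ^ (b - a).toNat, ?_⟩
    rw [Nat.cast_pow, Nat.cast_ofNat, ← zpow_natCast, Int.toNat_of_nonneg (by omega),
      ← zpow_add₀ two_ne_zero, add_sub_cancel]
  have h2a : (0:ℝ) < 2^a := zpow_pos two_pos a
  rw [hd] at hxu ⊢
  obtain ⟨hm₁, hm₂⟩ := hxm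
  obtain ⟨hu₁, hu₂⟩ := hxu
  have hdu : d * u < m + 1 := by
    have : ((d * u : ℕ) : ℝ) < (m + 1 : ℕ) := by push_cast; nlinarith
    exact_mod_cast this
  have hmd : m < d * (u + 1) := by
    have : ((m : ℕ) : ℝ) < (d * (u + 1) : ℕ) := by push_cast; nlinarith
    exact_mod_cast this
  have hdu' : ((d * u : ℕ) : ℝ) ≤ m := by exact_mod_cast Nat.lt_succ_iff.mp hdu
  have hmd' : ((m + 1 : ℕ) : ℝ) ≤ (d * (u + 1) : ℕ) := by exact_mod_cast hmd
  push_cast at hdu' hmd'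
  exact Ico_subset_Ico (by nlinarith) (by nlinarith)

lemma eq_of_mem_Ico_zpow_mul {c : ℤ} {n n' : ℕ} {ξ : ℝ}
    (hn : ξ ∈ Ico ((2:ℝ)^c * n) ((2:ℝ)^c * (n+1)))
    (hn' : ξ ∈ Ico ((2:ℝ)^c * n') ((2:ℝ)^c * (n'+1))) : n = n' := by
  have h2c : (0:ℝ) < 2^c := zpow_pos two_pos c
  have h₁ : (n:ℝ) < n' + 1 := by nlinarith [hn.1, hn'.2]
  have h₂ : (n':ℝ) < n + 1 := by nlinarith [hn.2, hn'.1]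
  have h₁' : n < n' + 1 := by exact_mod_cast h₁
  have h₂' : n' < n + 1 := by exact_mod_cast h₂
  omega

namespace Bitile

lemma left_mem_timeI (P : Bitile) : (2:ℝ)^P.j * P.m ∈ P.timeI :=
  ⟨le_rfl, by nlinarith [zpow_pos (two_pos : (0:ℝ) < 2) P.j]⟩

lemma left_mem_freqI (P : Bitile) : (2:ℝ)^(1-P.j) * P.n ∈ P.freqI :=
  ⟨le_rfl, by nlinarith [zpow_pos (two_pos : (0:ℝ) < 2) (1-P.j)]⟩

lemma below_refl (P : Bitile) : P.below P :=
  ⟨⟨(_, _), ⟨P.left_mem_timeI, P.left_mem_freqI⟩, ⟨P.left_mem_timeI, P.left_mem_freqI⟩⟩,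
    subset_rfl⟩

lemma j_le_of_timeI_subset {P Q : Bitile} (h : P.timeI ⊆ Q.timeI) : P.j ≤ Q.j := by
  have hP : (2:ℝ)^P.j * P.m < 2^P.j * (P.m + 1) := by
    nlinarith [zpow_pos (two_pos : (0:ℝ) < 2) P.j]
  obtain ⟨h₁, h₂⟩ := (Ico_subset_Ico_iff hP).mp h
  have hle : (2:ℝ)^P.j ≤ 2^Q.j := by linarith [mul_add ((2:ℝ)^P.j) P.m 1, mul_add ((2:ℝ)^Q.j) Q.m 1]
  exact (zpow_le_zpow_iff_right₀ one_lt_two).mp hle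

lemma freqI_subset_of_below {P Q : Bitile} (h : P.below Q) : Q.freqI ⊆ P.freqI := by
  obtain ⟨⟨_, hP, hQ⟩, hsub⟩ := h
  have := j_le_of_timeI_subset hsub
  exact Ico_zpow_mul_subset_of_mem (by omega) hQ.2 hP.2

lemma below_trans {P Q R : Bitile} (hPQ : P.below Q) (hQR : Q.below R) : P.below R := by
  have hfreq := (freqI_subset_of_below hQR).trans (freqI_subset_of_below hPQ)
  have htime := hPQ.2.trans hQR.2
  exact ⟨⟨(_, _), ⟨P.left_mem_timeI, hfreq R.left_mem_freqI⟩,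
    ⟨htime P.left_mem_timeI, R.left_mem_freqI⟩⟩, htime⟩

lemma below_antisymm {P Q : Bitile} (hPQ : P.below Q) (hQP : Q.below P) : P = Q := by
  have hj : P.j = Q.j := le_antisymm (j_le_of_timeI_subset hPQ.2) (j_le_of_timeI_subset hQP.2)
  obtain ⟨⟨x, ξ⟩, hP, hQ⟩ := hPQ.1
  have hm : P.m = Q.m := by
    rw [Bitile.rect, Bitile.timeI, hj] at hP
    exact eq_of_mem_Ico_zpow_mul hP.1 hQ.1
  have hn : P.n = Q.n := by
    rw [Bitile.rect, Bitile.freqI, hj] at hP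
    exact eq_of_mem_Ico_zpow_mul hP.2 hQ.2
  cases P; cases Q; simp_all

instance : PartialOrder Bitile where
  le := below
  le_refl := below_refl
  le_trans _ _ _ := below_trans
  le_antisymm _ _ := below_antisymm

lemma le_total_of_mem_rect {P Q : Bitile} {z : ℝ × ℝ} (hP : z ∈ P.rect) (hQ : z ∈ Q.rect) :
    P ≤ Q ∨ Q ≤ P := by
  rcases le_total P.j Q.j with h | h
  · exact Or.inl ⟨⟨z, hP, hQ⟩, Ico_zpow_mul_subset_of_mem h hP.1 hQ.1⟩
  · exact Or.inr ⟨⟨z, hQ, hP⟩, Ico_zpow_mul_subset_of_mem h hQ.1 hP.1⟩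

end Bitile

theorem sum_ofReal_setIntegral_le_wMeasure {ι : Type*} (w : ℝ → ℝ) (G : Set ℝ)
    (s : Finset ι) {I : ι → Set ℝ} (hI : ∀ i, MeasurableSet (I i)) {u : ι → ℝ → ℝ}
    (hu : ∀ i x, 0 ≤ u i x) (hpack : ∀ x, ∑ i ∈ s, (I i).indicator (u i) x ≤ G.indicator 1 x) :
    ∑ i ∈ s, ENNReal.ofReal (∫ x in I i, u i x * w x) ≤ wMeasure w G := by
  have hpoint : ∀ x, ∑ i ∈ s, (I i).indicator (fun y => ENNReal.ofReal (u i y * w y)) x ≤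
      G.indicator (fun y => ENNReal.ofReal (w y)) x := by
    intro x
    have hsum : ∑ i ∈ s, (I i).indicator (fun y => ENNReal.ofReal (u i y * w y)) x =
        ENNReal.ofReal (∑ i ∈ s, (I i).indicator (u i) x) * ENNReal.ofReal (w x) := by
      rw [ENNReal.ofReal_sum_of_nonneg fun i _ => indicator_nonneg (fun y _ => hu i y) x,
        Finset.sum_mul]
      refine Finset.sum_congr rfl fun i _ => ?_
      by_cases hx : x ∈ I i <;> simp [hx, ENNReal.ofReal_mul (hu i x)]
    rw [hsum]
    by_cases hx : x ∈ G
    · have hle : ENNReal.ofReal (∑ i ∈ s, (I i).indicator (u i) x) ≤ 1 :=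
        ENNReal.ofReal_le_one.mpr ((hpack x).trans (by simp [hx]))
      simpa [hx] using mul_le_mul_of_nonneg_right hle (zero_le : 0 ≤ ENNReal.ofReal (w x))
    · have hzero : ∑ i ∈ s, (I i).indicator (u i) x ≤ 0 := by simpa [hx] using hpack x
      simp [hx, ENNReal.ofReal_of_nonpos hzero]
  calc ∑ i ∈ s, ENNReal.ofReal (∫ x in I i, u i x * w x)
      ≤ ∑ i ∈ s, ∫⁻ x, (I i).indicator (fun y => ENNReal.ofReal (u i y * w y)) x := by
        refine Finset.sum_le_sum fun i _ => ?_
        rw [lintegral_indicator (hI i)]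
        exact ENNReal.ofReal_integral_le_lintegral_ofReal _ _
    _ ≤ ∫⁻ x, G.indicator (fun y => ENNReal.ofReal (w y)) x :=
        (Finset.sum_lintegral_le_lintegral_sum _ _ _).trans (lintegral_mono hpoint)
    _ ≤ wMeasure w G := (lintegral_indicator_le _ _).trans (withDensity_apply_le _ _)

section Density

variable (w g : ℝ → ℝ) (r' : ℝ) (M : ℝ → ℕ) (N : ℕ → ℝ → ℤ) (a : ℕ → ℝ → ℝ)

def freqMass (ω : Set ℝ) (x : ℝ) : ℝ :=
  ∑ k ∈ Finset.Icc 1 (M x), if ((N k x : ℝ)) ∈ ω then |a k x| ^ r' else 0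

def densityMass (Q : Bitile) : ℝ :=
  ∫ x in Q.timeI, |g x| ^ r' * freqMass r' M N a Q.freqI x * w x

def bitileDensity (Q : Bitile) : ℝ≥0∞ :=
  (ENNReal.ofReal (densityMass w g r' M N a Q) / wMeasure w Q.timeI) ^ (1 / r')

lemma density_singleton (P : Bitile) :
    density w g r' M N a {P} = ⨆ (Q : Bitile) (_ : P ≤ Q), bitileDensity w g r' M N a Q := by
  simp only [density, mem_singleton_iff, iSup_iSup_eq_left]
  rfl

lemma density_eq_iSup_singleton (s : Set Bitile) :
    density w g r' M N a s = ⨆ P ∈ s, density w g r' M N a {P} := by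
  simp only [density_singleton]
  rfl

variable {w g r' M N a}

lemma density_coe_lt {S : Finset Bitile} {c : ℝ≥0∞} (hc : 0 < c)
    (h : ∀ P ∈ S, density w g r' M N a {P} < c) : density w g r' M N a ↑S < c := by
  rw [density_eq_iSup_singleton]
  simp only [Finset.mem_coe]
  rw [← Finset.sup_eq_iSup]
  exact (Finset.sup_lt_iff hc).mpr h

lemma exists_le_lt_bitileDensity {P : Bitile} {c : ℝ≥0∞} (h : c < density w g r' M N a {P}) :
    ∃ Q, P ≤ Q ∧ c < bitileDensity w g r' M N a Q := by
  rw [density_singleton] at h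
  simpa only [lt_iSup_iff, exists_prop] using h

lemma wMeasure_timeI_le_of_lt_bitileDensity (hr' : 0 < r') {c : ℝ≥0∞} (hc : c ≠ 0)
    {Q : Bitile} (hQ : c < bitileDensity w g r' M N a Q) :
    wMeasure w Q.timeI ≤ (c ^ r')⁻¹ * ENNReal.ofReal (densityMass w g r' M N a Q) := by
  have hlt : c ^ r' < ENNReal.ofReal (densityMass w g r' M N a Q) / wMeasure w Q.timeI := by
    simpa [bitileDensity, ← ENNReal.rpow_mul, hr'.ne'] using
      ENNReal.rpow_lt_rpow hQ hr'
  rw [← ENNReal.div_eq_inv_mul, ENNReal.le_div_iff_mul_le (Or.inl (by positivity))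
    (Or.inl hlt.ne_top), mul_comm]
  exact ENNReal.mul_le_of_le_div hlt.le

lemma sum_indicator_freqMass_le {F : Finset Bitile} (hF : IsAntichain (· ≤ ·) (F : Set Bitile))
    (x : ℝ) : ∑ Q ∈ F, Q.timeI.indicator (freqMass r' M N a Q.freqI) x ≤
      ∑ k ∈ Finset.Icc 1 (M x), |a k x| ^ r' := by
  have hswap : ∑ Q ∈ F, Q.timeI.indicator (freqMass r' M N a Q.freqI) x =
      ∑ k ∈ Finset.Icc 1 (M x), ∑ Q ∈ F.filter (fun Q => ((x, (N k x : ℝ)) ∈ Q.rect)),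
        |a k x| ^ r' := by
    simp only [indicator_apply, freqMass, Finset.sum_filter, Bitile.rect, mem_prod]
    rw [Finset.sum_comm]
    refine Finset.sum_congr rfl fun Q _ => ?_
    by_cases hx : x ∈ Q.timeI <;> simp [hx]
  rw [hswap]
  refine Finset.sum_le_sum fun k _ => ?_
  have hcard : (F.filter fun Q => (x, (N k x : ℝ)) ∈ Q.rect).card ≤ 1 := by
    refine Finset.card_le_one.mpr fun Q hQ Q' hQ' => ?_
    rw [Finset.mem_filter] at hQ hQ'
    rcases Bitile.le_total_of_mem_rect hQ.2 hQ'.2 with h | h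
    · exact hF.eq hQ.1 hQ'.1 h
    · exact (hF.eq hQ'.1 hQ.1 h).symm
  rw [Finset.sum_const, nsmul_eq_mul]
  exact mul_le_of_le_one_left (by positivity) (by exact_mod_cast hcard)

lemma sum_densityMass_le_wMeasure {F : Finset Bitile} (hF : IsAntichain (· ≤ ·) (F : Set Bitile))
    (hr' : 0 < r') {G : Set ℝ} (hg : ∀ x, |g x| ≤ G.indicator (fun _ => (1:ℝ)) x)
    (ha : ∀ x, ∑ k ∈ Finset.Icc 1 (M x), |a k x| ^ r' = 1) :
    ∑ Q ∈ F, ENNReal.ofReal (densityMass w g r' M N a Q) ≤ wMeasure w G := by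
  have hmass : ∀ ω x, 0 ≤ freqMass r' M N a ω x := fun ω x =>
    Finset.sum_nonneg fun k _ => by split_ifs <;> positivity
  refine sum_ofReal_setIntegral_le_wMeasure w G F (fun _ => measurableSet_Ico)
    (fun Q x => mul_nonneg (by positivity) (hmass _ x)) fun x => ?_
  have hgx : |g x| ^ r' ≤ G.indicator 1 x := by
    by_cases hx : x ∈ G
    · simpa [hx] using Real.rpow_le_one (abs_nonneg _) (by simpa [hx] using hg x) hr'.le
    · have : g x = 0 := abs_nonpos_iff.mp (by simpa [hx] using hg x)
      simp [hx, this, Real.zero_rpow hr'.ne']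
  calc ∑ Q ∈ F, Q.timeI.indicator (fun y => |g y| ^ r' * freqMass r' M N a Q.freqI y) x
      = |g x| ^ r' * ∑ Q ∈ F, Q.timeI.indicator (freqMass r' M N a Q.freqI) x := by
        rw [Finset.mul_sum]
        exact Finset.sum_congr rfl fun Q _ => indicator_const_mul _ _ _ _
    _ ≤ G.indicator 1 x * 1 :=
        mul_le_mul hgx ((sum_indicator_freqMass_le hF x).trans (ha x).le)
          (Finset.sum_nonneg fun Q _ => indicator_nonneg (fun y _ => hmass _ y) x)
          (indicator_nonneg (fun _ _ => zero_le_one) x)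
    _ = G.indicator 1 x := mul_one _

end Density

theorem exists_trees_of_forall_le (S F : Finset Bitile) (hS : ∀ P ∈ S, ∃ Q ∈ F, P ≤ Q)
    {β : Type*} [AddCommMonoid β] (f : Bitile → β) :
    ∃ Ts : Finset Tree, (S : Set Bitile) = ⋃ T ∈ Ts, (T.elems : Set Bitile) ∧
      ∑ T ∈ Ts, f T.top = ∑ Q ∈ F, f Q := by
  let tree : Bitile → Tree := fun Q =>
    ⟨Q, S.filter (· ≤ Q), fun _ hP => (Finset.mem_filter.mp hP).2⟩
  refine ⟨F.image tree, ?_, Finset.sum_image fun Q _ Q' _ h => congrArg Tree.top h⟩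
  ext P
  simp only [Finset.mem_coe, mem_iUnion, exists_prop, Finset.mem_image]
  constructor
  · intro hP
    obtain ⟨Q, hQ, hPQ⟩ := hS P hP
    exact ⟨tree Q, ⟨Q, hQ, rfl⟩, Finset.mem_filter.mpr ⟨hP, hPQ⟩⟩
  · rintro ⟨_, ⟨Q, -, rfl⟩, hP⟩
    exact (Finset.mem_filter.mp hP).1

/-- Lemma 4.5, tree selection by density: for every `λ > 0` and finite
collection `Ps` there is `Ps' ⊆ Ps` with `density(Ps') < λ/2` and `Ps \ Ps'` a union of
trees `Ts` with `Σ_{T ∈ Ts} w(I_T) ≤ C λ^{-r'} w(G)`, `C = C(q,r,[w]_{A_q})`. -/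
theorem tree_selection_by_density (q r : ℝ) (hq : 1 < q) (hr : 2 * q < r) (A : ℝ) :
    ∃ C : ℝ, 0 < C ∧ ∀ w : ℝ → ℝ, IsWeight w → ApBoundedBy w q A →
    ∀ (G : Set ℝ) (g : ℝ → ℝ) (M : ℝ → ℕ) (N : ℕ → ℝ → ℤ) (a : ℕ → ℝ → ℝ),
      MeasurableSet G → Measurable g → Measurable M →
      (∀ k, Measurable (N k)) → (∀ k, Measurable (a k)) →
      (∀ x, |g x| ≤ Set.indicator G (fun _ => (1:ℝ)) x) →
      (∀ x k l, k < l → l ≤ M x → N k x < N l x) →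
      (∀ x, ∑ j ∈ Finset.Icc 1 (M x), |a j x| ^ (r/(r-1)) = 1) →
    ∀ lam : ℝ, 0 < lam → ∀ Ps : Finset Bitile,
      ∃ Ps' : Finset Bitile, Ps' ⊆ Ps ∧
        density w g (r/(r-1)) M N a ↑Ps' < ENNReal.ofReal (lam/2) ∧
        ∃ Ts : Finset Tree,
          ((Ps \ Ps' : Finset Bitile) : Set Bitile) = ⋃ T ∈ Ts, (T.elems : Set Bitile) ∧
          ∑ T ∈ Ts, wMeasure w T.top.timeI ≤
            ENNReal.ofReal C * ENNReal.ofReal lam ^ (-(r/(r-1))) * wMeasure w G := by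
  have hr' : 0 < r / (r - 1) := div_pos (by linarith) (by linarith)
  refine ⟨4 ^ (r / (r - 1)), by positivity, ?_⟩
  intro w _ _ G g M N a _ _ _ _ _ hgG _ ha lam hlam Ps
  set r' := r / (r - 1)
  set c := ENNReal.ofReal (lam / 4)
  let Ps' := Ps.filter fun P => density w g r' M N a {P} < ENNReal.ofReal (lam / 2)
  have hdense : ∀ P ∈ Ps \ Ps', ∃ Q, P ≤ Q ∧ c < bitileDensity w g r' M N a Q := by
    intro P hP
    obtain ⟨hPs, hPs'⟩ := Finset.mem_sdiff.mp hP
    have hhalf : ENNReal.ofReal (lam / 2) ≤ density w g r' M N a {P} :=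
      not_lt.mp fun h => hPs' (Finset.mem_filter.mpr ⟨hPs, h⟩)
    exact exists_le_lt_bitileDensity
      (((ENNReal.ofReal_lt_ofReal_iff (by linarith)).mpr (by linarith)).trans_le hhalf)
  obtain ⟨F, hF, hFdense, hcover⟩ := (Ps \ Ps').exists_isAntichain_cover _ hdense
  obtain ⟨Ts, hTs, hsum⟩ := exists_trees_of_forall_le _ F hcover fun Q => wMeasure w Q.timeI
  refine ⟨Ps', Finset.filter_subset _ _,
    density_coe_lt (by simpa using hlam) fun P hP => (Finset.mem_filter.mp hP).2, Ts, hTs, ?_⟩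
  calc ∑ T ∈ Ts, wMeasure w T.top.timeI
      = ∑ Q ∈ F, wMeasure w Q.timeI := hsum
    _ ≤ ∑ Q ∈ F, (c ^ r')⁻¹ * ENNReal.ofReal (densityMass w g r' M N a Q) :=
        Finset.sum_le_sum fun Q hQ =>
          wMeasure_timeI_le_of_lt_bitileDensity hr' (by simpa [c] using hlam) (hFdense Q hQ)
    _ ≤ (c ^ r')⁻¹ * wMeasure w G := by
        rw [← Finset.mul_sum]
        gcongr
        exact sum_densityMass_le_wMeasure hF hr' hgG ha
    _ = _ := by rw [ENNReal.inv_ofReal_div_rpow hlam (by norm_num)]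

end Paper
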